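/- arXiv:1703.08337 — 4 statements merged into one kernel-verified Lean document; each statement's English description precedes it below -/
import Mathlib

section
/- Let m, k be natural numbers with k ≤ m and let π : Fin m → ℝ. There exists a probability distribution P on the finite subsets of Fin m, supported on subsets of cardinality exactly k, such that for every j ∈ Fin m, Σ_{A : j ∈ A} P(A) = π_j, if and only if 0 ≤ π_j ≤ 1 for all j and Σ_{j=1}^m π_j = k. -/
/-!
Necessity is double counting: `∑ⱼ P(j ∈ A) = E[#A] = k`. For sufficiency, choose `S` with
`#S = k` and lift `π` to the doubly stochastic matrix whose rows in `S` are `π / k` and whose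
other rows are `(1 - π) / (m - k)`. By Birkhoff's theorem it is a mixture of permutation
matrices; the rows in `S` of the permutation matrix of `σ` add up to the indicator of `σ(S)`, so
drawing `σ` from the mixture and taking `A = σ(S)` has marginals `π`.
-/

open Finset

theorem Finset.sum_div_card_of_imp {ι K : Type*} [Semifield K] [CharZero K] {s : Finset ι} {x : K}
    (h : s = ∅ → x = 0) : ∑ _i ∈ s, x / #s = x := by
  rw [sum_const, nsmul_eq_mul, mul_div_cancel_of_imp' (by simpa using h)]

variable {α : Type*} [Fintype α] [DecidableEq α]

theorem marginal_nonneg_le_one {P : Finset α → ℝ} (hP0 : ∀ A, 0 ≤ P A) (hP1 : ∑ A, P A = 1)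
    (j : α) : 0 ≤ ∑ A with j ∈ A, P A ∧ ∑ A with j ∈ A, P A ≤ 1 :=
  ⟨sum_nonneg fun A _ ↦ hP0 A,
    hP1 ▸ sum_le_sum_of_subset_of_nonneg (filter_subset _ _) fun A _ _ ↦ hP0 A⟩

theorem sum_marginal_eq_card {P : Finset α → ℝ} {k : ℕ} (hP1 : ∑ A, P A = 1)
    (hPk : ∀ A, P A ≠ 0 → #A = k) : ∑ j, ∑ A with j ∈ A, P A = k :=
  calc ∑ j, ∑ A with j ∈ A, P A = ∑ A, #A * P A := by
        rw [sum_comm' (t' := univ) (s' := id) (by simp)]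
        simp
    _ = ∑ A, k * P A := sum_congr rfl fun A _ ↦ by
        by_cases h : P A = 0
        · simp [h]
        · rw [hPk A h]
    _ = k := by rw [← mul_sum, hP1, mul_one]

theorem exists_distribution_of_mixture {ι : Type*} [Fintype ι] {w : ι → ℝ} (hw0 : ∀ i, 0 ≤ w i)
    (hw1 : ∑ i, w i = 1) {k : ℕ} (f : ι → Finset α) (hf : ∀ i, #(f i) = k) :
    ∃ P : Finset α → ℝ, (∀ A, 0 ≤ P A) ∧ ∑ A, P A = 1 ∧ (∀ A, P A ≠ 0 → #A = k) ∧
      ∀ j, ∑ A with j ∈ A, P A = ∑ i with j ∈ f i, w i := by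
  refine ⟨fun A ↦ ∑ i with f i = A, w i, fun A ↦ sum_nonneg fun i _ ↦ hw0 i,
    (sum_fiberwise _ _ _).trans hw1, fun A hA ↦ ?_, fun j ↦ ?_⟩
  · obtain ⟨i, hi, -⟩ := exists_ne_zero_of_sum_ne_zero hA
    rw [← (mem_filter.1 hi).2, hf]
  · rw [← sum_fiberwise_of_maps_to (g := f) (t := {A | j ∈ A}) fun i hi ↦ by simpa using hi]
    refine sum_congr rfl fun A hA ↦ ?_
    rw [filter_filter]
    exact sum_congr (filter_congr fun i _ ↦ ⟨fun h ↦ ⟨h ▸ (mem_filter.1 hA).2, h⟩, And.right⟩)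
      fun _ _ ↦ rfl

omit [Fintype α] in
theorem sum_permMatrix_apply (σ : Equiv.Perm α) (S : Finset α) (j : α) :
    ∑ i ∈ S, σ.permMatrix ℝ i j = if j ∈ S.map σ.toEmbedding then 1 else 0 := by
  simp [Equiv.toPEquiv_apply, ← Equiv.eq_symm_apply]

noncomputable def hypersimplexLift (S : Finset α) (π : α → ℝ) : Matrix α α ℝ :=
  .of fun i j ↦ if i ∈ S then π j / #S else (1 - π j) / #Sᶜ

variable {S : Finset α} {π : α → ℝ}

theorem hypersimplexLift_apply (i j : α) :
    hypersimplexLift S π i j = if i ∈ S then π j / #S else (1 - π j) / #Sᶜ :=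
  rfl

theorem sum_one_sub_eq_card_compl (hsum : ∑ j, π j = #S) : ∑ j, (1 - π j) = #Sᶜ := by
  rw [sum_sub_distrib, hsum, card_compl, Nat.cast_sub (card_le_univ S)]
  simp

theorem sum_hypersimplexLift_rows (hπ : ∀ j, 0 ≤ π j ∧ π j ≤ 1) (hsum : ∑ j, π j = #S)
    (j : α) : ∑ i ∈ S, hypersimplexLift S π i j = π j := by
  simp only [hypersimplexLift_apply]
  rw [sum_ite_of_true fun i hi ↦ hi]
  refine sum_div_card_of_imp fun hS ↦ ?_
  rw [hS, card_empty, Nat.cast_zero, sum_eq_zero_iff_of_nonneg fun j _ ↦ (hπ j).1] at hsum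
  exact hsum j (mem_univ j)

theorem sum_hypersimplexLift_compl_rows (hπ : ∀ j, 0 ≤ π j ∧ π j ≤ 1)
    (hsum : ∑ j, π j = #S) (j : α) : ∑ i ∈ Sᶜ, hypersimplexLift S π i j = 1 - π j := by
  simp only [hypersimplexLift_apply]
  rw [sum_ite_of_false fun i hi ↦ mem_compl.1 hi]
  refine sum_div_card_of_imp fun hS ↦ ?_
  have hcompl := sum_one_sub_eq_card_compl hsum
  rw [hS, card_empty, Nat.cast_zero,
    sum_eq_zero_iff_of_nonneg fun j _ ↦ sub_nonneg.2 (hπ j).2] at hcompl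
  exact hcompl j (mem_univ j)

theorem hypersimplexLift_mem_doublyStochastic (hπ : ∀ j, 0 ≤ π j ∧ π j ≤ 1)
    (hsum : ∑ j, π j = #S) : hypersimplexLift S π ∈ doublyStochastic ℝ α := by
  rw [mem_doublyStochastic_iff_sum]
  refine ⟨fun i j ↦ ?_, fun i ↦ ?_, fun j ↦ ?_⟩
  · rw [hypersimplexLift_apply]
    split_ifs
    exacts [div_nonneg (hπ j).1 (Nat.cast_nonneg _),
      div_nonneg (sub_nonneg.2 (hπ j).2) (Nat.cast_nonneg _)]
  · simp only [hypersimplexLift_apply]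
    split_ifs with hi
    · rw [← sum_div, hsum, div_self]
      exact_mod_cast (card_pos.2 ⟨i, hi⟩).ne'
    · rw [← sum_div, sum_one_sub_eq_card_compl hsum, div_self]
      exact_mod_cast (card_pos.2 ⟨i, mem_compl.2 hi⟩).ne'
  · rw [← sum_add_sum_compl S, sum_hypersimplexLift_rows hπ hsum,
      sum_hypersimplexLift_compl_rows hπ hsum, add_sub_cancel]

theorem exists_distribution_of_mem_hypersimplex {k : ℕ} (hπ : ∀ j, 0 ≤ π j ∧ π j ≤ 1)
    (hsum : ∑ j, π j = k) :
    ∃ P : Finset α → ℝ, (∀ A, 0 ≤ P A) ∧ ∑ A, P A = 1 ∧ (∀ A, P A ≠ 0 → #A = k) ∧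
      ∀ j, ∑ A with j ∈ A, P A = π j := by
  have hk : (k : ℝ) ≤ #(univ : Finset α) :=
    calc (k : ℝ) = ∑ j, π j := hsum.symm
      _ ≤ ∑ _j : α, 1 := sum_le_sum fun j _ ↦ (hπ j).2
      _ = #univ := by simp
  obtain ⟨S, -, rfl⟩ := exists_subset_card_eq (by exact_mod_cast hk)
  obtain ⟨w, hw0, hw1, hM⟩ :=
    exists_eq_sum_perm_of_mem_doublyStochastic (hypersimplexLift_mem_doublyStochastic hπ hsum)
  obtain ⟨P, hP0, hP1, hPk, hPm⟩ :=
    exists_distribution_of_mixture hw0 hw1 (fun σ ↦ S.map σ.toEmbedding) fun σ ↦ card_map _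
  refine ⟨P, hP0, hP1, hPk, fun j ↦ ?_⟩
  rw [hPm, ← sum_hypersimplexLift_rows hπ hsum j, ← hM, sum_filter]
  simp only [Matrix.sum_apply, Matrix.smul_apply, smul_eq_mul]
  rw [sum_comm]
  refine sum_congr rfl fun σ _ ↦ ?_
  rw [← mul_sum, sum_permMatrix_apply, mul_boole]

theorem probabilistic_scheduling_feasibility_general (m k : ℕ)
    (π : Fin m → ℝ) :
    (∃ P : Finset (Fin m) → ℝ,
        (∀ A, 0 ≤ P A) ∧
        (∑ A : Finset (Fin m), P A = 1) ∧
        (∀ A, P A ≠ 0 → A.card = k) ∧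
        (∀ j : Fin m, ∑ A ∈ Finset.univ.filter (fun A : Finset (Fin m) => j ∈ A), P A = π j))
      ↔ ((∀ j, 0 ≤ π j ∧ π j ≤ 1) ∧ ∑ j : Fin m, π j = (k : ℝ)) := by
  refine ⟨fun ⟨P, hP0, hP1, hPk, hPm⟩ ↦ ⟨fun j ↦ ?_, ?_⟩, fun ⟨hπ, hsum⟩ ↦ ?_⟩
  · exact hPm j ▸ marginal_nonneg_le_one hP0 hP1 j
  · simpa only [hPm] using sum_marginal_eq_card hP1 hPk
  · exact exists_distribution_of_mem_hypersimplex hπ hsum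

/-- Feasibility of probabilistic scheduling: a probability distribution on
`k`-element subsets of `Fin m` with prescribed marginals `π_j = P(j ∈ A)`
exists iff `0 ≤ π_j ≤ 1` for all `j` and `Σ_j π_j = k`. -/
theorem probabilistic_scheduling_feasibility (m k : ℕ) (hk : k ≤ m)
    (π : Fin m → ℝ) :
    (∃ P : Finset (Fin m) → ℝ,
        (∀ A, 0 ≤ P A) ∧
        (∑ A : Finset (Fin m), P A = 1) ∧
        (∀ A, P A ≠ 0 → A.card = k) ∧
        (∀ j : Fin m, ∑ A ∈ Finset.univ.filter (fun A : Finset (Fin m) => j ∈ A), P A = π j))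
      ↔ ((∀ j, 0 ≤ π j ∧ π j ≤ 1) ∧ ∑ j : Fin m, π j = (k : ℝ)) :=
  probabilistic_scheduling_feasibility_general m k π
end

section
/- Let α > 0, Λ ≥ 0, β ≥ 0. If there exists t > 0 with t(t − α + Λ) + Λ α (e^{β t} − 1) < 0, then Λ (1/α + β) < 1 (that is, the traffic intensity ρ = Λ/α + Λβ satisfies ρ < 1). -/
/-!
Since `e^x ≥ 1 + x`, the feasibility constraint forces `t (t - α + Λ + Λαβ) < 0`,
hence `Λ (1 + αβ) < α - t < α`; dividing by `α` gives `ρ < 1`.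
-/

open Real

lemma mul_le_mul_exp_sub_one {c : ℝ} (hc : 0 ≤ c) (x : ℝ) : c * x ≤ c * (exp x - 1) :=
  mul_le_mul_of_nonneg_left (by linarith [add_one_le_exp x]) hc

lemma add_mul_one_add_lt_of_feasible {α Λ β t : ℝ} (hα : 0 < α) (hΛ : 0 ≤ Λ) (ht : 0 < t)
    (h : t * (t - α + Λ) + Λ * α * (exp (β * t) - 1) < 0) :
    t + Λ * (1 + α * β) < α := by
  have hlin : t * (t - α + Λ + Λ * α * β) < 0 := by
    linarith [mul_le_mul_exp_sub_one (mul_nonneg hΛ hα.le) (β * t)]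
  linarith [(pos_iff_neg_of_mul_neg hlin).mp ht]

theorem feasibility_implies_stability_general (α Λ β : ℝ)
    (hα : 0 < α) (hΛ : 0 ≤ Λ)
    (h : ∃ t : ℝ, 0 < t ∧
      t * (t - α + Λ) + Λ * α * (Real.exp (β * t) - 1) < 0) :
    Λ * (1 / α + β) < 1 := by
  obtain ⟨t, ht, hfeas⟩ := h
  have hlt : Λ * (1 + α * β) < α := by
    linarith [add_mul_one_add_lt_of_feasible hα hΛ ht hfeas]
  calc Λ * (1 / α + β) = Λ * (1 + α * β) / α := by field_simp
    _ < 1 := (div_lt_one hα).mpr hlt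

/-- Stability claim: if the feasibility constraint
`t(t − α + Λ) + Λα(e^{βt} − 1) < 0` holds for some `t > 0`, then the traffic
intensity `ρ = Λ(1/α + β)` satisfies `ρ < 1`. -/
theorem feasibility_implies_stability (α Λ β : ℝ)
    (hα : 0 < α) (hΛ : 0 ≤ Λ) (hβ : 0 ≤ β)
    (h : ∃ t : ℝ, 0 < t ∧
      t * (t - α + Λ) + Λ * α * (Real.exp (β * t) - 1) < 0) :
    Λ * (1 / α + β) < 1 :=
  feasibility_implies_stability_general α Λ β hα hΛ h
end

section
/- Let α > 0, Λ ≥ 0, β ≥ 0, and x ∈ ℝ. Define g(t) = −t² + (α − Λ) t − Λ α (e^{β t} − 1) and let S = {t ∈ ℝ : t > 0 and g(t) > 0}. Then the function F(t) = α t e^{(β − x) t} / g(t) is convex on S. -/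
/-!
Dividing the feasibility function by `t > 0` gives
`φ(t) = g(t) / t = (α - Λ) - t - Λα (e^{βt} - 1) / t`, and `(e^{βt} - 1) / t` is convex on
`(0, ∞)` when `β ≥ 0`, so `φ` is concave there. Hence the feasible region is the
superlevel set `{t > 0 | φ t > 0}` of a concave function, which is convex, and on it
`F(t) = α e^{(β - x)t} / φ(t) = exp (log α + (β - x) t - log φ(t))` is the exponential of
a convex function, because `log ∘ φ` is concave.
-/

open Real Set

lemma two_le_exp_mul_sq_sub_two_mul_add_two {u : ℝ} (hu : 0 ≤ u) :
    2 ≤ exp u * (u ^ 2 - 2 * u + 2) := by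
  have hquad : 0 < u ^ 2 - 2 * u + 2 := by nlinarith [sq_nonneg (u - 1)]
  -- `(1 + u + u² / 2) (u² - 2u + 2) = 2 + u⁴ / 2`
  nlinarith [mul_le_mul_of_nonneg_right (quadratic_le_exp_of_nonneg hu) hquad.le, pow_nonneg hu 4]

lemma convexOn_exp_mul_sub_one_div {β : ℝ} (hβ : 0 ≤ β) :
    ConvexOn ℝ (Ioi 0) fun t => (exp (β * t) - 1) / t := by
  have hexp (t : ℝ) : HasDerivAt (fun t => exp (β * t)) (β * exp (β * t)) t := by
    simpa [mul_comm] using ((hasDerivAt_id t).const_mul β).exp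
  have hf' (t : ℝ) (ht : 0 < t) : HasDerivAt (fun t => (exp (β * t) - 1) / t)
      ((β * t * exp (β * t) - exp (β * t) + 1) / t ^ 2) t := by
    refine (((hexp t).sub_const 1).div (hasDerivAt_id' t) ht.ne').congr_deriv ?_
    field_simp
    ring
  have hf'' (t : ℝ) (ht : 0 < t) :
      HasDerivAt (fun t => (β * t * exp (β * t) - exp (β * t) + 1) / t ^ 2)
        ((exp (β * t) * ((β * t) ^ 2 - 2 * (β * t) + 2) - 2) / t ^ 3) t := by
    refine ((((hasDerivAt_id' t).const_mul β).mul (hexp t)).sub (hexp t) |>.add_const 1).div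
      (hasDerivAt_pow 2 t) (pow_ne_zero 2 ht.ne') |>.congr_deriv ?_
    simp only [Pi.mul_apply, Pi.sub_apply]
    field_simp
    ring
  refine convexOn_of_hasDerivWithinAt2_nonneg (convex_Ioi 0)
    (fun t ht => (hf' t ht).continuousAt.continuousWithinAt)
    (fun t ht => (hf' t (interior_subset ht)).hasDerivWithinAt)
    (fun t ht => (hf'' t (interior_subset ht)).hasDerivWithinAt) fun t ht => ?_
  have ht : 0 < t := interior_subset ht
  have := two_le_exp_mul_sq_sub_two_mul_add_two (mul_nonneg hβ ht.le)
  exact div_nonneg (by linarith) (by positivity)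

section

variable {E : Type*} [AddCommGroup E] [Module ℝ E] {s : Set E} {f : E → ℝ}

lemma ConvexOn.rexp (hf : ConvexOn ℝ s f) : ConvexOn ℝ s fun x => exp (f x) :=
  ⟨hf.1, fun _ hx _ hy _ _ ha hb hab =>
    (exp_le_exp.2 (hf.2 hx hy ha hb hab)).trans
      (convexOn_exp.2 (mem_univ _) (mem_univ _) ha hb hab)⟩

lemma ConcaveOn.log (hf : ConcaveOn ℝ s f) (hpos : ∀ x ∈ s, 0 < f x) :
    ConcaveOn ℝ s fun x => log (f x) :=
  ⟨hf.1, fun x hx y hy _ _ ha hb hab =>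
    (strictConcaveOn_log_Ioi.concaveOn.2 (hpos x hx) (hpos y hy) ha hb hab).trans
      (log_le_log (convex_Ioi (0 : ℝ) (hpos x hx) (hpos y hy) ha hb hab)
        (hf.2 hx hy ha hb hab))⟩

end

lemma ConcaveOn.convexOn_mul_exp_div {s : Set ℝ} {φ : ℝ → ℝ} (hφ : ConcaveOn ℝ s φ)
    (hpos : ∀ t ∈ s, 0 < φ t) {c : ℝ} (hc : 0 < c) (k : ℝ) :
    ConvexOn ℝ s fun t => c * exp (k * t) / φ t := by
  have hlin : ConvexOn ℝ s fun t => Real.log c + k * t :=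
    ((LinearMap.mul ℝ ℝ k).convexOn hφ.1).add_const (Real.log c) |>.congr fun t _ => by
      simp [add_comm]
  refine (hlin.sub (hφ.log hpos)).rexp.congr fun t ht => ?_
  simp only [Pi.sub_apply, exp_sub, exp_add, exp_log hc, exp_log (hpos t ht)]

/-- Single-node core of Theorem 3: the per-node term
`F(t) = α t e^{(β − x)t} / g(t)` with
`g(t) = −t² + (α − Λ)t − Λα(e^{βt} − 1)` is convex on the feasible region
`S = {t > 0 : g(t) > 0}`. -/
theorem per_node_objective_convex_in_t (α Λ β x : ℝ)
    (hα : 0 < α) (hΛ : 0 ≤ Λ) (hβ : 0 ≤ β) :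
    ConvexOn ℝ
      {t : ℝ | 0 < t ∧
        0 < -t ^ 2 + (α - Λ) * t - Λ * α * (Real.exp (β * t) - 1)}
      (fun t : ℝ => α * t * Real.exp ((β - x) * t) /
        (-t ^ 2 + (α - Λ) * t - Λ * α * (Real.exp (β * t) - 1))) := by
  set φ : ℝ → ℝ := fun t => (α - Λ) - t - Λ * α * ((exp (β * t) - 1) / t)
  have hφ : ConcaveOn ℝ (Ioi 0) φ :=
    ((concaveOn_const _ (convex_Ioi 0)).sub (convexOn_id (convex_Ioi 0))).sub
      ((convexOn_exp_mul_sub_one_div hβ).smul (mul_nonneg hΛ hα.le))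
  have hg (t : ℝ) (ht : 0 < t) :
      -t ^ 2 + (α - Λ) * t - Λ * α * (exp (β * t) - 1) = t * φ t := by
    simp only [φ]
    field_simp
    ring
  have hS : {t : ℝ | 0 < t ∧ 0 < -t ^ 2 + (α - Λ) * t - Λ * α * (exp (β * t) - 1)} =
      {t ∈ Ioi 0 | 0 < φ t} := by
    ext t
    refine and_congr_right fun ht => ?_
    rw [hg t ht, mul_pos_iff_of_pos_left ht]
  rw [hS]
  refine ((hφ.subset (sep_subset _ _) (hφ.convex_gt 0)).convexOn_mul_exp_div
    (fun t ht => ht.2) hα (β - x)).congr fun t ⟨ht, hφt⟩ => ?_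
  rw [hg t ht]
  field_simp [(mem_Ioi.1 ht).ne', hφt.ne']
end

section
/- Let 0 ≤ C₁ ≤ C₂ with C₂ > 0. Then the function G(Λ) = Λ (1 − C₁ Λ)/(1 − C₂ Λ) is convex on the interval [0, 1/C₂). -/
/-!
Partial fractions give
`Λ(1 − C₁Λ)/(1 − C₂Λ) = (C₂ − C₁)/C₂² · (1 − C₂Λ)⁻¹ + (C₁/C₂) Λ + (C₁ − C₂)/C₂²`,
a nonnegative multiple of the convex function `(1 − C₂Λ)⁻¹` plus an affine function.
-/

lemma convexOn_inv_one_sub_mul (c : ℝ) :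
    ConvexOn ℝ {x : ℝ | c * x < 1} fun x ↦ (1 - c * x)⁻¹ := by
  have h := (convexOn_zpow (𝕜 := ℝ) (-1)).comp_affineMap
    (AffineMap.const ℝ ℝ (1 : ℝ) - c • AffineMap.id ℝ ℝ)
  simpa [Function.comp_def, zpow_neg_one, Set.preimage, sub_pos] using h

lemma mul_one_sub_mul_div_one_sub_mul {c₁ c₂ x : ℝ} (hc₂ : c₂ ≠ 0) (hx : 1 - c₂ * x ≠ 0) :
    x * (1 - c₁ * x) / (1 - c₂ * x) =
      (c₂ - c₁) / c₂ ^ 2 * (1 - c₂ * x)⁻¹ + (c₁ / c₂ * x + (c₁ - c₂) / c₂ ^ 2) := by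
  rw [div_eq_iff hx, add_mul, mul_assoc, inv_mul_cancel₀ hx]
  field_simp
  ring

lemma convexOn_mul_one_sub_mul_div_one_sub_mul {c₁ c₂ : ℝ} (hc₂ : c₂ ≠ 0) (hc₁₂ : c₁ ≤ c₂) :
    ConvexOn ℝ {x : ℝ | c₂ * x < 1} fun x ↦ x * (1 - c₁ * x) / (1 - c₂ * x) := by
  have hpole : ConvexOn ℝ {x : ℝ | c₂ * x < 1}
      fun x ↦ (c₂ - c₁) / c₂ ^ 2 * (1 - c₂ * x)⁻¹ :=
    (convexOn_inv_one_sub_mul c₂).smul (by have := sub_nonneg.2 hc₁₂; positivity)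
  have haffine : ConvexOn ℝ {x : ℝ | c₂ * x < 1}
      fun x ↦ c₁ / c₂ * x + (c₁ - c₂) / c₂ ^ 2 :=
    (LinearMap.lsmul ℝ ℝ (c₁ / c₂) |>.convexOn hpole.1).add_const _
  refine (hpole.add haffine).congr fun x hx ↦ ?_
  exact (mul_one_sub_mul_div_one_sub_mul hc₂ (sub_ne_zero.2 (ne_of_gt hx))).symm

theorem G_convex_general (C₁ C₂ : ℝ) (hC₁₂ : C₁ ≤ C₂) (hC₂ : 0 < C₂) :
    ConvexOn ℝ (Set.Ico (0 : ℝ) (1 / C₂))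
      (fun Λ : ℝ => Λ * (1 - C₁ * Λ) / (1 - C₂ * Λ)) :=
  (convexOn_mul_one_sub_mul_div_one_sub_mul hC₂.ne' hC₁₂).subset
    (fun _ hx ↦ (lt_div_iff₀' hC₂).1 hx.2) (convex_Ico _ _)

/-- Single-node core of Theorem 4: for `0 ≤ C₁ ≤ C₂` with `C₂ > 0`, the
function `G(Λ) = Λ(1 − C₁Λ)/(1 − C₂Λ)` is convex on `[0, 1/C₂)`. -/
theorem G_convex (C₁ C₂ : ℝ) (hC₁ : 0 ≤ C₁) (hC₁₂ : C₁ ≤ C₂) (hC₂ : 0 < C₂) :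
    ConvexOn ℝ (Set.Ico (0 : ℝ) (1 / C₂))
      (fun Λ : ℝ => Λ * (1 - C₁ * Λ) / (1 - C₂ * Λ)) :=
  G_convex_general C₁ C₂ hC₁₂ hC₂
end
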